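/- Let M ≥ 2, let π* ∈ ℝ^M be an entrywise positive probability row vector, and let P ∈ ℝ^{M×M} be an irreducible row-stochastic matrix with stationary probability vector π. Define d̂_i = π_i / π*_i and d_i = d̂_i / (Σ_{j=1}^M d̂_j). Then d_i ∈ (0,1) for every i, and π* is the stationary probability vector of the irreducible row-stochastic matrix P* = diag(d)·P − diag(d) + I; that is, π*·P* = π*. -/

import Mathlib

open Matrix Finset Filter

/-- A matrix is row-stochastic if all entries are nonnegative and each row sums to 1. -/
def RowStochastic {M : ℕ} (P : Matrix (Fin M) (Fin M) ℝ) : Prop :=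
  (∀ i j, 0 ≤ P i j) ∧ (∀ i, ∑ j, P i j = 1)

/-- A matrix is irreducible if for every pair of indices `i, j` there is `k ≥ 1`
with `(P ^ k) i j > 0`. -/
def IsIrreducibleMatrix {M : ℕ} (P : Matrix (Fin M) (Fin M) ℝ) : Prop :=
  ∀ i j, ∃ k : ℕ, 1 ≤ k ∧ 0 < (P ^ k) i j

/-- `π` is a stationary probability (row) vector of `P`. -/
def IsStationaryProbVec {M : ℕ} (P : Matrix (Fin M) (Fin M) ℝ) (π : Fin M → ℝ) : Prop :=
  (∀ i, 0 ≤ π i) ∧ (∑ i, π i = 1) ∧ π ᵥ* P = π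

/-!
The stationary vector `π` of an irreducible chain is positive, so `d̂` is positive and, as there
are at least two states, its normalisation `d` lies in `(0, 1)`. Writing `P* = 1 + diag(d) (P - 1)`,
row `i` of `P*` is the convex combination `(1 - dᵢ) eᵢ + dᵢ Pᵢ`, so `P*` is row-stochastic and
dominates `(min d) • P` entrywise; hence every positive entry of a power of `P` stays positive in
the same power of `P*`. Finally `π* P* = π* + (π* ∘ d)(P - 1)` and `π* ∘ d = π / ∑ d̂` is
`P`-invariant.
-/

namespace Matrix

variable {n α : Type*} [Fintype n] [DecidableEq n]

theorem pow_apply_le_pow_apply [Semiring α] [PartialOrder α] [IsOrderedRing α]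
    {A B : Matrix n n α} (hA : ∀ i j, 0 ≤ A i j) (hAB : ∀ i j, A i j ≤ B i j) (k : ℕ) :
    ∀ i j, (A ^ k) i j ≤ (B ^ k) i j := by
  induction k with
  | zero => simp
  | succ k ih =>
    intro i j
    rw [pow_succ, pow_succ, mul_apply, mul_apply]
    exact Finset.sum_le_sum fun l _ =>
      mul_le_mul (ih i l) (hAB l j) (hA l j) ((pow_apply_nonneg hA k i l).trans (ih i l))

theorem diagonal_mul_sub_diagonal_add_one_apply [Ring α] (d : n → α) (P : Matrix n n α)
    (i j : n) :
    (diagonal d * P - diagonal d + 1) i j = d i * P i j + if i = j then 1 - d i else 0 := by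
  rcases eq_or_ne i j with rfl | hij
  · simp only [sub_apply, add_apply, diagonal_mul, diagonal_apply_eq, one_apply_eq, if_true]
    abel
  · simp [diagonal_mul, hij]

theorem vecMul_diagonal_mul_sub_diagonal_add_one [CommRing α] (μ d : n → α)
    (P : Matrix n n α) :
    μ ᵥ* (diagonal d * P - diagonal d + 1) = (μ * d) ᵥ* P - μ * d + μ := by
  have hμd : μ ᵥ* diagonal d = μ * d := funext (vecMul_diagonal μ d)
  rw [vecMul_add, vecMul_sub, ← vecMul_vecMul, hμd, vecMul_one]

end Matrix

theorem div_sum_mem_Ioo {ι : Type*} [Fintype ι] [Nontrivial ι] {f : ι → ℝ}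
    (hf : ∀ i, 0 < f i) (i : ι) : f i / ∑ j, f j ∈ Set.Ioo 0 1 := by
  obtain ⟨j, hji⟩ := exists_ne i
  have hlt : f i < ∑ j, f j :=
    Finset.single_lt_sum hji (mem_univ i) (mem_univ j) (hf j) fun k _ _ => (hf k).le
  have hsum : 0 < ∑ j, f j := (hf i).trans hlt
  exact ⟨div_pos (hf i) hsum, (div_lt_one hsum).mpr hlt⟩

variable {M : ℕ}

theorem IsIrreducibleMatrix.of_smul_le {P Q : Matrix (Fin M) (Fin M) ℝ}
    (hirr : IsIrreducibleMatrix P) (hP : ∀ i j, 0 ≤ P i j) {c : ℝ} (hc : 0 < c)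
    (hPQ : ∀ i j, c * P i j ≤ Q i j) : IsIrreducibleMatrix Q := by
  intro i j
  obtain ⟨k, hk, hpos⟩ := hirr i j
  have hcP : ∀ i j, 0 ≤ (c • P) i j := fun i j => mul_nonneg hc.le (hP i j)
  refine ⟨k, hk, ?_⟩
  calc 0 < c ^ k * (P ^ k) i j := mul_pos (pow_pos hc k) hpos
    _ = ((c • P) ^ k) i j := by rw [smul_pow, Matrix.smul_apply, smul_eq_mul]
    _ ≤ (Q ^ k) i j := pow_apply_le_pow_apply hcP hPQ k i j

theorem IsStationaryProbVec.vecMul_pow {P : Matrix (Fin M) (Fin M) ℝ} {π : Fin M → ℝ}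
    (hπ : IsStationaryProbVec P π) (k : ℕ) : π ᵥ* (P ^ k) = π := by
  induction k with
  | zero => simp
  | succ k ih => rw [pow_succ, ← vecMul_vecMul, ih, hπ.2.2]

theorem IsStationaryProbVec.pos {P : Matrix (Fin M) (Fin M) ℝ} {π : Fin M → ℝ}
    (hπ : IsStationaryProbVec P π) (hP : ∀ i j, 0 ≤ P i j) (hirr : IsIrreducibleMatrix P)
    (i : Fin M) : 0 < π i := by
  obtain ⟨j, hj⟩ : ∃ j, 0 < π j := by
    by_contra! h
    have : ∑ j, π j = 0 := Finset.sum_eq_zero fun j _ => (h j).antisymm (hπ.1 j)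
    linarith [hπ.2.1]
  obtain ⟨k, -, hk⟩ := hirr j i
  rw [← hπ.vecMul_pow k, vecMul, dotProduct]
  exact Finset.sum_pos' (fun l _ => mul_nonneg (hπ.1 l) (pow_apply_nonneg hP k l i))
    ⟨j, mem_univ j, mul_pos hj hk⟩

section Lazy

variable {P : Matrix (Fin M) (Fin M) ℝ} {d : Fin M → ℝ}

theorem le_diagonal_mul_sub_diagonal_add_one_apply (hd₁ : ∀ i, d i ≤ 1)
    (i j : Fin M) : d i * P i j ≤ (diagonal d * P - diagonal d + 1) i j := by
  rw [diagonal_mul_sub_diagonal_add_one_apply, le_add_iff_nonneg_right]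
  split_ifs <;> linarith [hd₁ i]

theorem RowStochastic.diagonal_mul_sub_diagonal_add_one (hP : RowStochastic P)
    (hd₀ : ∀ i, 0 ≤ d i) (hd₁ : ∀ i, d i ≤ 1) :
    RowStochastic (diagonal d * P - diagonal d + 1) := by
  refine ⟨fun i j => ?_, fun i => ?_⟩
  · exact (mul_nonneg (hd₀ i) (hP.1 i j)).trans
      (le_diagonal_mul_sub_diagonal_add_one_apply hd₁ i j)
  · simp only [diagonal_mul_sub_diagonal_add_one_apply, Finset.sum_add_distrib,
      ← Finset.mul_sum, hP.2 i, Finset.sum_ite_eq, mem_univ, if_true]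
    ring

theorem IsIrreducibleMatrix.diagonal_mul_sub_diagonal_add_one [Nonempty (Fin M)]
    (hirr : IsIrreducibleMatrix P) (hP : ∀ i j, 0 ≤ P i j)
    (hd₀ : ∀ i, 0 < d i) (hd₁ : ∀ i, d i ≤ 1) :
    IsIrreducibleMatrix (diagonal d * P - diagonal d + 1) := by
  obtain ⟨m, hm⟩ := Finite.exists_min d
  exact hirr.of_smul_le hP (hd₀ m) fun i j => (mul_le_mul_of_nonneg_right (hm i) (hP i j)).trans
    (le_diagonal_mul_sub_diagonal_add_one_apply hd₁ i j)

end Lazy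

theorem stmt_5_general {M : ℕ} (hM : 2 ≤ M)
    (πstar : Fin M → ℝ) (hπstar_pos : ∀ i, 0 < πstar i)
    (P : Matrix (Fin M) (Fin M) ℝ) (π : Fin M → ℝ)
    (hP : RowStochastic P) (hirr : IsIrreducibleMatrix P)
    (hπ : IsStationaryProbVec P π)
    (dhat d : Fin M → ℝ)
    (hdhat : ∀ i, dhat i = π i / πstar i)
    (hd : ∀ i, d i = dhat i / ∑ j, dhat j) :
    (∀ i, d i ∈ Set.Ioo (0 : ℝ) 1) ∧
      RowStochastic (Matrix.diagonal d * P - Matrix.diagonal d + 1) ∧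
      IsIrreducibleMatrix (Matrix.diagonal d * P - Matrix.diagonal d + 1) ∧
      πstar ᵥ* (Matrix.diagonal d * P - Matrix.diagonal d + 1) = πstar := by
  have : Nontrivial (Fin M) := Fin.nontrivial_iff_two_le.mpr hM
  have hdhat_pos : ∀ i, 0 < dhat i := fun i => by
    rw [hdhat]; exact div_pos (hπ.pos hP.1 hirr i) (hπstar_pos i)
  have hd01 : ∀ i, d i ∈ Set.Ioo (0 : ℝ) 1 := fun i => hd i ▸ div_sum_mem_Ioo hdhat_pos i
  have hπstar_d : πstar * d = (∑ j, dhat j)⁻¹ • π := funext fun i => by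
    have := (hπstar_pos i).ne'
    simp only [Pi.mul_apply, Pi.smul_apply, smul_eq_mul, hd, hdhat]
    field_simp
  refine ⟨hd01, hP.diagonal_mul_sub_diagonal_add_one (fun i => (hd01 i).1.le)
    (fun i => (hd01 i).2.le), hirr.diagonal_mul_sub_diagonal_add_one hP.1 (fun i => (hd01 i).1)
    (fun i => (hd01 i).2.le), ?_⟩
  rw [vecMul_diagonal_mul_sub_diagonal_add_one, hπstar_d, smul_vecMul, hπ.2.2, sub_self, zero_add]

theorem stmt_5 {M : ℕ} (hM : 2 ≤ M)
    (πstar : Fin M → ℝ) (hπstar_pos : ∀ i, 0 < πstar i) (hπstar_sum : ∑ i, πstar i = 1)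
    (P : Matrix (Fin M) (Fin M) ℝ) (π : Fin M → ℝ)
    (hP : RowStochastic P) (hirr : IsIrreducibleMatrix P)
    (hπ : IsStationaryProbVec P π)
    (dhat d : Fin M → ℝ)
    (hdhat : ∀ i, dhat i = π i / πstar i)
    (hd : ∀ i, d i = dhat i / ∑ j, dhat j) :
    (∀ i, d i ∈ Set.Ioo (0 : ℝ) 1) ∧
      RowStochastic (Matrix.diagonal d * P - Matrix.diagonal d + 1) ∧
      IsIrreducibleMatrix (Matrix.diagonal d * P - Matrix.diagonal d + 1) ∧
      πstar ᵥ* (Matrix.diagonal d * P - Matrix.diagonal d + 1) = πstar :=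
  stmt_5_general hM πstar hπstar_pos P π hP hirr hπ dhat d hdhat hd
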